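/- There exists a constant c > 0 such that for every x > 0, | r'(x) + (2π)^{−1/2} x^{−1/2} | ≤ c; that is, the derivative of r satisfies r'(x) = −(1/√(2π)) x^{−1/2} + O(1) uniformly on (0, ∞). -/

import Mathlib

/-!
Write the integrand of `rDeriv x` as `k(t) e^{-tx}`. The kernel `k(t) = t²(1+t²)^{-5/4} e^{L(t)/π}`
differs from `t^{-1/2}` by an integrable function: near `0` both are `O(t^{-1/2})` because `L` is
bounded, and near `∞` the substitution `s ↦ 1/s` gives `∫_0^∞ log s/(1+s²) ds = 0`, so
`L(t) = -∫_t^∞ log s/(1+s²) ds = O(t^{-3/4})` and `k(t) - t^{-1/2} = O(t^{-5/4})`.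
Since `∫_0^∞ t^{-1/2} e^{-tx} dt = Γ(1/2) x^{-1/2} = √π x^{-1/2}`, this gives the claim.
-/

open MeasureTheory Real

/-- `L t = ∫_0^t (log s)/(1+s²) ds`. -/
noncomputable def Lfun (t : ℝ) : ℝ := ∫ s in (0 : ℝ)..t, Real.log s / (1 + s ^ 2)

/-- The derivative of `r`:
`r'(x) = -(√2/(2π)) ∫_0^∞ t² (1+t²)^{-5/4} exp(L(t)/π) e^{-tx} dt`. -/
noncomputable def rDeriv (x : ℝ) : ℝ :=
  -(Real.sqrt 2 / (2 * Real.pi)) * ∫ t in Set.Ioi (0 : ℝ),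
    t ^ 2 * (1 + t ^ 2) ^ (-(5 / 4 : ℝ)) * Real.exp (Lfun t / Real.pi) * Real.exp (-t * x)

open Set

noncomputable def powMajorant (a b t : ℝ) : ℝ := if t ≤ 1 then t ^ a else t ^ b

lemma integrableOn_powMajorant {a b : ℝ} (ha : -1 < a) (hb : b < -1) :
    IntegrableOn (powMajorant a b) (Ioi 0) := by
  have h₀ : IntegrableOn (powMajorant a b) (Ioc 0 1) :=
    (intervalIntegral.intervalIntegrable_rpow' ha (a := 0) (b := 1)).1.congr_fun
      (fun t ht => (if_pos ht.2).symm) measurableSet_Ioc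
  have h₁ : IntegrableOn (powMajorant a b) (Ioi 1) :=
    (integrableOn_Ioi_rpow_of_lt hb one_pos).congr_fun
      (fun t ht => (if_neg (not_le.2 ht)).symm) measurableSet_Ioi
  simpa only [Ioc_union_Ioi_eq_Ioi zero_le_one] using h₀.union h₁

lemma abs_log_div_one_add_sq_le {s : ℝ} (hs : 0 < s) :
    |log s / (1 + s ^ 2)| ≤ 4 * powMajorant (-(1 / 4)) (-(7 / 4)) s := by
  rw [abs_div, abs_of_pos (by positivity : (0 : ℝ) < 1 + s ^ 2), powMajorant]
  split_ifs with hs1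
  · have h := abs_log_mul_self_rpow_lt s (1 / 4) hs hs1 (by norm_num)
    rw [abs_mul, abs_of_pos (rpow_pos_of_pos hs _), ← lt_div_iff₀ (rpow_pos_of_pos hs _)] at h
    calc |log s| / (1 + s ^ 2) ≤ |log s| := div_le_self (abs_nonneg _) (by nlinarith)
      _ ≤ 4 * s ^ (-(1 / 4) : ℝ) := by
        rw [rpow_neg hs.le, ← div_eq_mul_inv]; norm_num at h ⊢; exact h.le
  · have hlog : 0 ≤ log s := log_nonneg (by linarith)
    calc |log s| / (1 + s ^ 2) ≤ s ^ (1 / 4 : ℝ) / (1 / 4) / s ^ (2 : ℝ) := by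
          rw [abs_of_nonneg hlog, rpow_two]
          exact div_le_div₀ (by positivity) (log_le_rpow_div hs.le (by norm_num))
            (by positivity) (by linarith)
      _ = 4 * s ^ (-(7 / 4) : ℝ) := by
        rw [div_div_eq_mul_div, div_one, mul_comm, mul_div_assoc, ← rpow_sub hs]; norm_num

lemma integrableOn_log_div_one_add_sq :
    IntegrableOn (fun s => log s / (1 + s ^ 2)) (Ioi 0) :=
  ((integrableOn_powMajorant (by norm_num) (by norm_num)).const_mul 4).mono'
    (measurable_log.div (by fun_prop)).aestronglyMeasurable <|
      (ae_restrict_mem measurableSet_Ioi).mono fun _ hs => abs_log_div_one_add_sq_le hs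

lemma integral_log_div_one_add_sq : ∫ s in Ioi 0, log s / (1 + s ^ 2) = 0 := by
  have h := integral_comp_rpow_Ioi (fun s => log s / (1 + s ^ 2)) (p := -1) (by norm_num)
  have hinv : ∀ s ∈ Ioi (0 : ℝ), (|(-1 : ℝ)| * s ^ ((-1 : ℝ) - 1)) •
      (log (s ^ (-1 : ℝ)) / (1 + (s ^ (-1 : ℝ)) ^ 2)) = -(log s / (1 + s ^ 2)) := by
    intro s (hs : 0 < s)
    rw [show (-1 : ℝ) - 1 = -2 by norm_num, rpow_neg hs.le, rpow_neg_one, rpow_two, log_inv,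
      smul_eq_mul]
    field_simp
    ring
  rw [setIntegral_congr_fun measurableSet_Ioi hinv, integral_neg] at h
  linarith

lemma Lfun_eq_neg_setIntegral_Ioi {t : ℝ} (ht : 0 < t) :
    Lfun t = -∫ s in Ioi t, log s / (1 + s ^ 2) := by
  have h := setIntegral_union (Ioc_disjoint_Ioi le_rfl) measurableSet_Ioi
    (integrableOn_log_div_one_add_sq.mono_set Ioc_subset_Ioi_self)
    (integrableOn_log_div_one_add_sq.mono_set (Ioi_subset_Ioi ht.le))
  rw [Ioc_union_Ioi_eq_Ioi ht.le, integral_log_div_one_add_sq] at h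
  rw [Lfun, intervalIntegral.integral_of_le ht.le]
  linarith

lemma abs_Lfun_le {t : ℝ} (ht : 0 < t) :
    |Lfun t| ≤ ∫ s in Ioi 0, |log s / (1 + s ^ 2)| := by
  rw [Lfun, intervalIntegral.integral_of_le ht.le]
  exact abs_integral_le_integral_abs.trans <| setIntegral_mono_set
    integrableOn_log_div_one_add_sq.abs (ae_of_all _ fun _ => abs_nonneg _)
    Ioc_subset_Ioi_self.eventuallyLE

lemma abs_Lfun_le_rpow {t : ℝ} (ht : 1 ≤ t) : |Lfun t| ≤ 16 / 3 * t ^ (-(3 / 4) : ℝ) := by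
  have ht₀ : 0 < t := one_pos.trans_le ht
  have htail : ∫ s in Ioi t, 4 * s ^ (-(7 / 4) : ℝ) = 16 / 3 * t ^ (-(3 / 4) : ℝ) := by
    rw [integral_const_mul, integral_Ioi_rpow_of_lt (by norm_num) ht₀]; norm_num; ring
  rw [Lfun_eq_neg_setIntegral_Ioi ht₀, abs_neg, ← htail, ← norm_eq_abs]
  refine norm_integral_le_of_norm_le
    ((integrableOn_Ioi_rpow_of_lt (by norm_num) ht₀).const_mul 4)
    ((ae_restrict_mem measurableSet_Ioi).mono fun s (hs : t < s) => ?_)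
  have h := abs_log_div_one_add_sq_le (ht₀.trans hs)
  rwa [powMajorant, if_neg (by linarith)] at h

lemma continuous_Lfun : Continuous Lfun := by
  have h : ∀ a b : ℝ, IntervalIntegrable (fun s => log s / (1 + s ^ 2)) volume a b := by
    intro a b
    simp_rw [div_eq_mul_inv]
    exact intervalIntegral.intervalIntegrable_log'.mul_continuousOn
      (Continuous.continuousOn (by fun_prop (disch := intro; positivity)))
  exact intervalIntegral.continuous_primitive h 0

lemma abs_exp_sub_one_le_exp_abs_mul_abs (y : ℝ) : |exp y - 1| ≤ exp |y| * |y| := by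
  rcases le_total 0 y with hy | hy
  · rw [abs_of_nonneg hy, abs_of_nonneg (by linarith [add_one_le_exp y])]
    have h := mul_le_mul_of_nonneg_left (add_one_le_exp (-y)) (exp_pos y).le
    rw [← exp_add, add_neg_cancel, exp_zero] at h
    nlinarith
  · rw [abs_of_nonpos hy, abs_of_nonpos (by linarith [exp_le_one_iff.2 hy])]
    nlinarith [add_one_le_exp y, one_le_exp (neg_nonneg.2 hy)]

lemma abs_Lfun_div_pi_le (t : ℝ) : |Lfun t / π| ≤ |Lfun t| := by
  rw [abs_div, abs_of_pos pi_pos]; exact div_le_self (abs_nonneg _) (by linarith [pi_gt_three])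

lemma exp_abs_Lfun_div_pi_le {t : ℝ} (ht : 0 < t) :
    exp |Lfun t / π| ≤ exp (∫ s in Ioi 0, |log s / (1 + s ^ 2)|) :=
  exp_le_exp.2 ((abs_Lfun_div_pi_le t).trans (abs_Lfun_le ht))

lemma sq_mul_one_add_sq_rpow_eq {t : ℝ} (ht : 0 < t) :
    t ^ 2 * (1 + t ^ 2) ^ (-(5 / 4) : ℝ) =
      t ^ (-(1 / 2) : ℝ) * (1 - (1 + t ^ 2)⁻¹) ^ (5 / 4 : ℝ) := by
  have hpos : 0 < 1 + t ^ 2 := by positivity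
  have hnum : (t ^ 2) ^ (5 / 4 : ℝ) = t ^ (5 / 2 : ℝ) := by
    rw [← rpow_natCast, ← rpow_mul ht.le]; norm_num
  have hexp : t ^ (-(1 / 2) : ℝ) * t ^ (5 / 2 : ℝ) = t ^ 2 := by
    rw [← rpow_add ht]; norm_num
  rw [show 1 - (1 + t ^ 2)⁻¹ = t ^ 2 / (1 + t ^ 2) by field_simp; ring,
    div_rpow (sq_nonneg t) hpos.le, hnum, mul_div_assoc', hexp, rpow_neg hpos.le]
  ring

lemma rpow_sub_sq_mul_one_add_sq_rpow_mem {t : ℝ} (ht : 0 < t) :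
    t ^ (-(1 / 2) : ℝ) - t ^ 2 * (1 + t ^ 2) ^ (-(5 / 4) : ℝ) ∈
      Icc 0 (5 / 4 * t ^ (-(1 / 2) : ℝ) * (1 + t ^ 2)⁻¹) := by
  have hε₀ : 0 ≤ (1 + t ^ 2)⁻¹ := by positivity
  have hε₁ : (1 + t ^ 2)⁻¹ ≤ 1 := inv_le_one_of_one_le₀ (by nlinarith)
  have hle : (1 - (1 + t ^ 2)⁻¹) ^ (5 / 4 : ℝ) ≤ 1 :=
    rpow_le_one (by linarith) (by linarith) (by norm_num)
  have hbernoulli : 1 + 5 / 4 * -(1 + t ^ 2)⁻¹ ≤ (1 - (1 + t ^ 2)⁻¹) ^ (5 / 4 : ℝ) := by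
    rw [sub_eq_add_neg]; exact one_add_mul_self_le_rpow_one_add (by linarith) (by norm_num)
  have hu : 0 < t ^ (-(1 / 2) : ℝ) := rpow_pos_of_pos ht _
  rw [sq_mul_one_add_sq_rpow_eq ht]
  constructor <;> nlinarith

noncomputable def rKernel (t : ℝ) : ℝ := t ^ 2 * (1 + t ^ 2) ^ (-(5 / 4 : ℝ)) * exp (Lfun t / π)

lemma continuous_rKernel : Continuous rKernel := by
  have h : Continuous fun t : ℝ => (1 + t ^ 2) ^ (-(5 / 4 : ℝ)) :=
    (by fun_prop : Continuous fun t : ℝ => 1 + t ^ 2).rpow_const fun t => Or.inl (by positivity)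
  have := continuous_Lfun
  unfold rKernel
  fun_prop

lemma exists_abs_rKernel_sub_rpow_le :
    ∃ C, ∀ t > 0, |rKernel t - t ^ (-(1 / 2) : ℝ)| ≤ C * powMajorant (-(1 / 2)) (-(5 / 4)) t := by
  set M := ∫ s in Ioi 0, |log s / (1 + s ^ 2)|
  have hM : 0 ≤ M := setIntegral_nonneg measurableSet_Ioi fun _ _ => abs_nonneg _
  refine ⟨7 * exp M, fun t ht => ?_⟩
  set u := t ^ (-(1 / 2) : ℝ)
  set φ := t ^ 2 * (1 + t ^ 2) ^ (-(5 / 4) : ℝ)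
  set E := exp (Lfun t / π)
  have hu : 0 < u := rpow_pos_of_pos ht _
  have hφ : 0 ≤ φ := by positivity
  obtain ⟨hφu, huφ⟩ := rpow_sub_sq_mul_one_add_sq_rpow_mem ht
  have hexp := exp_abs_Lfun_div_pi_le ht
  have hE : E ≤ exp M := (exp_le_exp.2 (le_abs_self _)).trans hexp
  have hE₁ : |E - 1| ≤ exp M * |Lfun t| :=
    (abs_exp_sub_one_le_exp_abs_mul_abs _).trans
      (mul_le_mul hexp (abs_Lfun_div_pi_le _) (abs_nonneg _) (exp_pos _).le)
  have hK : 1 ≤ exp M := one_le_exp hM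
  have hsplit : |rKernel t - u| ≤ (u - φ) * exp M + u * |E - 1| := by
    calc |rKernel t - u| = |(φ - u) * E + u * (E - 1)| := by
          show |φ * E - u| = _; ring_nf
      _ ≤ (u - φ) * E + u * |E - 1| := by
        refine (abs_add_le _ _).trans ?_
        rw [abs_mul, abs_mul, abs_sub_comm, abs_of_nonneg hφu, abs_of_pos hu,
          abs_of_pos (exp_pos _)]
      _ ≤ (u - φ) * exp M + u * |E - 1| := by gcongr
  rw [powMajorant]
  split_ifs with ht₁
  · have hE₂ : |E - 1| ≤ 2 * exp M := by
      rw [abs_le]; constructor <;> linarith [exp_pos (Lfun t / π)]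
    nlinarith
  · have ht₁' : 1 ≤ t := by linarith
    have huv : u * t ^ (-(3 / 4) : ℝ) = t ^ (-(5 / 4) : ℝ) := by rw [← rpow_add ht]; norm_num
    have hdecay : (1 + t ^ 2)⁻¹ ≤ t ^ (-(3 / 4) : ℝ) := by
      rw [rpow_neg ht.le]
      refine inv_anti₀ (by positivity) ?_
      have := rpow_le_rpow_of_exponent_le ht₁' (show (3 / 4 : ℝ) ≤ (2 : ℕ) by norm_num)
      rw [rpow_natCast] at this; linarith
    have hL := abs_Lfun_le_rpow ht₁'
    have : 0 ≤ u * |E - 1| := by positivity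
    nlinarith [mul_le_mul_of_nonneg_left hdecay hu.le, mul_le_mul_of_nonneg_left hL hu.le]

lemma abs_setIntegral_mul_exp_sub_Gamma_le {F B : ℝ → ℝ} {s x : ℝ} (hs : 0 < s) (hx : 0 < x)
    (hF : AEStronglyMeasurable F (volume.restrict (Ioi 0))) (hB : IntegrableOn B (Ioi 0))
    (hFB : ∀ t ∈ Ioi (0 : ℝ), |F t - t ^ (s - 1)| ≤ B t) :
    |(∫ t in Ioi 0, F t * exp (-t * x)) - Gamma s * x ^ (-s)| ≤ ∫ t in Ioi 0, B t := by
  have hpow : IntegrableOn (fun t => t ^ (s - 1) * exp (-t * x)) (Ioi 0) := by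
    simpa [rpow_one, mul_comm x] using
      integrableOn_rpow_mul_exp_neg_mul_rpow (by linarith : -1 < s - 1) one_pos hx
  have hpow_eq : ∫ t in Ioi 0, t ^ (s - 1) * exp (-t * x) = Gamma s * x ^ (-s) := by
    simp_rw [neg_mul, mul_comm _ x]
    rw [integral_rpow_mul_exp_neg_mul_Ioi hs hx, one_div, inv_rpow hx.le, rpow_neg hx.le,
      mul_comm]
  have hbound : ∀ t ∈ Ioi (0 : ℝ), ‖(F t - t ^ (s - 1)) * exp (-t * x)‖ ≤ B t := by
    intro t (ht : 0 < t)
    rw [norm_mul, norm_of_nonneg (exp_pos _).le]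
    exact (mul_le_of_le_one_right (norm_nonneg _)
      (exp_le_one_iff.2 (by nlinarith [mul_pos ht hx]))).trans (hFB t ht)
  have herr : IntegrableOn (fun t => (F t - t ^ (s - 1)) * exp (-t * x)) (Ioi 0) :=
    hB.mono' ((hF.sub (by fun_prop)).mul (by fun_prop))
      ((ae_restrict_mem measurableSet_Ioi).mono hbound)
  have hsplit : ∫ t in Ioi 0, F t * exp (-t * x) = (∫ t in Ioi 0, t ^ (s - 1) * exp (-t * x)) +
      ∫ t in Ioi 0, (F t - t ^ (s - 1)) * exp (-t * x) := by
    rw [← integral_add hpow herr]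
    exact setIntegral_congr_fun measurableSet_Ioi fun t _ => by ring
  rw [hsplit, hpow_eq, add_sub_cancel_left, ← norm_eq_abs]
  exact norm_integral_le_of_norm_le hB ((ae_restrict_mem measurableSet_Ioi).mono hbound)

lemma sqrt_two_div_two_pi_mul_sqrt_pi : √2 / (2 * π) * √π = (2 * π) ^ (-(1 / 2 : ℝ)) := by
  rw [rpow_neg (by positivity), ← sqrt_eq_rpow, div_mul_eq_mul_div, ← sqrt_mul zero_le_two,
    sqrt_div_self]

/-- `r'(x) = -(2π)^{-1/2} x^{-1/2} + O(1)` uniformly on `(0,∞)`. -/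
theorem stmt16 :
    ∃ c : ℝ, 0 < c ∧ ∀ x : ℝ, 0 < x →
      |rDeriv x + (2 * Real.pi) ^ (-(1 / 2 : ℝ)) * x ^ (-(1 / 2 : ℝ))| ≤ c := by
  obtain ⟨C, hC⟩ := exists_abs_rKernel_sub_rpow_le
  set B := fun t => C * powMajorant (-(1 / 2)) (-(5 / 4)) t
  have hB : IntegrableOn B (Ioi 0) :=
    (integrableOn_powMajorant (by norm_num) (by norm_num)).const_mul C
  refine ⟨max (√2 / (2 * π) * ∫ t in Ioi 0, B t) 1, lt_max_of_lt_right one_pos,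
    fun x hx => le_max_of_le_left ?_⟩
  have hlaplace := abs_setIntegral_mul_exp_sub_Gamma_le (s := 1 / 2) (by norm_num) hx
    continuous_rKernel.aestronglyMeasurable hB (by norm_num; exact hC)
  have hrDeriv : rDeriv x + (2 * π) ^ (-(1 / 2 : ℝ)) * x ^ (-(1 / 2 : ℝ)) =
      -(√2 / (2 * π)) * ((∫ t in Ioi 0, rKernel t * exp (-t * x)) -
        Gamma (1 / 2) * x ^ (-(1 / 2 : ℝ))) := by
    rw [Gamma_one_half_eq, ← sqrt_two_div_two_pi_mul_sqrt_pi]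
    change -(√2 / (2 * π)) * (∫ t in Ioi 0, rKernel t * exp (-t * x)) + _ = _
    ring
  rw [hrDeriv, abs_mul, abs_neg, abs_of_pos (by positivity)]
  exact mul_le_mul_of_nonneg_left hlaplace (by positivity)
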